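/- Let X be a topological space and g : X → ℝ a function of the first Baire class. Then there exists a separately continuous function f : X × X → ℝ such that f(x,x) = g(x) for every x ∈ X. -/
import Mathlib

open Filter Topology

namespace Stmt9Aux

variable {X : Type*} [TopologicalSpace X]

noncomputable def rho (gs : ℕ → X → ℝ) (x y : X) : ℝ :=
  ∑' k, (1/2:ℝ)^k * min |gs k x - gs k y| 1

lemma term_nonneg (gs : ℕ → X → ℝ) (x y : X) (k : ℕ) :
    0 ≤ (1/2:ℝ)^k * min |gs k x - gs k y| 1 :=
  mul_nonneg (by positivity) (le_min (abs_nonneg _) zero_le_one)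

lemma term_le (gs : ℕ → X → ℝ) (x y : X) (k : ℕ) :
    (1/2:ℝ)^k * min |gs k x - gs k y| 1 ≤ (1/2:ℝ)^k := by
  calc (1/2:ℝ)^k * min |gs k x - gs k y| 1 ≤ (1/2:ℝ)^k * 1 :=
        mul_le_mul_of_nonneg_left (min_le_right _ _) (by positivity)
    _ = (1/2:ℝ)^k := mul_one _

lemma rho_summable (gs : ℕ → X → ℝ) (x y : X) :
    Summable fun k => (1/2:ℝ)^k * min |gs k x - gs k y| 1 :=
  Summable.of_nonneg_of_le (term_nonneg gs x y) (term_le gs x y)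
    (summable_geometric_of_lt_one (by norm_num) (by norm_num))

lemma rho_nonneg (gs : ℕ → X → ℝ) (x y : X) : 0 ≤ rho gs x y :=
  tsum_nonneg (term_nonneg gs x y)

lemma rho_cont (gs : ℕ → X → ℝ) (hc : ∀ n, Continuous (gs n)) :
    Continuous fun p : X × X => rho gs p.1 p.2 := by
  apply continuous_tsum (u := fun k => (1/2:ℝ)^k)
  · intro k
    exact (continuous_const.mul
      ((((hc k).comp continuous_fst).sub ((hc k).comp continuous_snd)).abs.min continuous_const))
  · exact summable_geometric_of_lt_one (by norm_num) (by norm_num)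
  · intro k p
    rw [Real.norm_eq_abs, abs_of_nonneg (term_nonneg gs p.1 p.2 k)]
    exact term_le gs p.1 p.2 k

lemma rho_self (gs : ℕ → X → ℝ) (x : X) : rho gs x x = 0 := by
  simp [rho]

lemma eq_of_rho_eq_zero (gs : ℕ → X → ℝ) {x y : X} (h : rho gs x y = 0) (k : ℕ) :
    gs k x = gs k y := by
  have h1 : (1/2:ℝ)^k * min |gs k x - gs k y| 1 ≤ 0 := by
    rw [← h]
    exact Summable.le_tsum (rho_summable gs x y) k (fun j _ => term_nonneg gs x y j)
  have h2 : (1/2:ℝ)^k * min |gs k x - gs k y| 1 = 0 :=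
    le_antisymm h1 (term_nonneg gs x y k)
  have h3 : min |gs k x - gs k y| 1 = 0 := by
    have hp : (0:ℝ) < (1/2:ℝ)^k := by positivity
    rcases mul_eq_zero.1 h2 with h | h
    · exact absurd h (ne_of_gt hp)
    · exact h
  have h4 : |gs k x - gs k y| = 0 := by
    rcases min_eq_iff.1 h3 with ⟨h, _⟩ | ⟨h, _⟩
    · exact h
    · norm_num at h
  have := abs_eq_zero.1 h4
  linarith

lemma gauge (gs : ℕ → X → ℝ) (x y : X) (m : ℕ) (hm : 2 ≤ m)
    (h : rho gs x y ≤ (1/4:ℝ)^m) :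
    ∀ k ≤ m + 1, |gs k x - gs k y| ≤ 2 * (1/2:ℝ)^m := by
  intro k hk
  have h1 : (1/2:ℝ)^k * min |gs k x - gs k y| 1 ≤ (1/4:ℝ)^m :=
    le_trans (Summable.le_tsum (rho_summable gs x y) k (fun j _ => term_nonneg gs x y j)) h
  have e1 : ((1/2:ℝ)^k) * 2^k = 1 := by
    rw [← mul_pow]; norm_num
  have h2 : min |gs k x - gs k y| 1 ≤ (1/4:ℝ)^m * 2^k := by
    calc min |gs k x - gs k y| 1
        = ((1/2:ℝ)^k * min |gs k x - gs k y| 1) * 2^k := by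
          rw [mul_comm ((1/2:ℝ)^k) _, mul_assoc, e1, mul_one]
      _ ≤ (1/4:ℝ)^m * 2^k := mul_le_mul_of_nonneg_right h1 (by positivity)
  have h3 : (1/4:ℝ)^m * 2^k ≤ 2 * (1/2:ℝ)^m := by
    have hpk : (2:ℝ)^k ≤ 2^(m+1) := pow_le_pow_right₀ (by norm_num) hk
    have e2 : (1/4:ℝ)^m * 2^m = (1/2:ℝ)^m := by
      rw [← mul_pow]; norm_num
    calc (1/4:ℝ)^m * 2^k ≤ (1/4:ℝ)^m * 2^(m+1) :=
          mul_le_mul_of_nonneg_left hpk (by positivity)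
      _ = 2 * (1/2:ℝ)^m := by rw [pow_succ, ← mul_assoc, e2]; ring
  have h4 : 2 * (1/2:ℝ)^m < 1 := by
    have : (1/2:ℝ)^m ≤ (1/2:ℝ)^2 := pow_le_pow_of_le_one (by norm_num) (by norm_num) hm
    norm_num at this ⊢
    linarith
  have h5 : min |gs k x - gs k y| 1 ≤ 2 * (1/2:ℝ)^m := le_trans h2 h3
  rcases le_or_gt |gs k x - gs k y| 1 with h6 | h6
  · rwa [min_eq_left h6] at h5
  · rw [min_eq_right h6.le] at h5
    linarith


set_option linter.unusedSectionVars false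

noncomputable def hh (n : ℕ) (t : ℝ) : ℝ :=
  min 1 (max 0 (((1/4:ℝ)^n - t) / ((1/4:ℝ)^n - (1/4:ℝ)^(n+1))))

lemma denom_pos (n : ℕ) : (0:ℝ) < (1/4:ℝ)^n - (1/4:ℝ)^(n+1) := by
  have := pow_pos (show (0:ℝ) < 1/4 by norm_num) n
  rw [pow_succ]
  nlinarith

lemma hh_cont (n : ℕ) : Continuous (hh n) := by
  apply continuous_const.min
  apply continuous_const.max
  exact (continuous_const.sub continuous_id).div_const _

lemma hh_nonneg (n : ℕ) (t : ℝ) : 0 ≤ hh n t :=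
  le_min zero_le_one (le_max_left 0 _)

lemma hh_le_one (n : ℕ) (t : ℝ) : hh n t ≤ 1 := min_le_left _ _

lemma hh_eq_one (n : ℕ) (t : ℝ) (h : t ≤ (1/4:ℝ)^(n+1)) : hh n t = 1 := by
  have hd := denom_pos n
  have h1 : (1:ℝ) ≤ ((1/4:ℝ)^n - t) / ((1/4:ℝ)^n - (1/4:ℝ)^(n+1)) :=
    (one_le_div hd).2 (by linarith)
  exact min_eq_left (le_max_of_le_right h1)

lemma hh_eq_zero (n : ℕ) (t : ℝ) (h : (1/4:ℝ)^n ≤ t) : hh n t = 0 := by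
  have hd := denom_pos n
  have h1 : ((1/4:ℝ)^n - t) / ((1/4:ℝ)^n - (1/4:ℝ)^(n+1)) ≤ 0 :=
    div_nonpos_of_nonpos_of_nonneg (by linarith) hd.le
  rw [hh, max_eq_left h1]
  norm_num

noncomputable def S (gs : ℕ → X → ℝ) (N : ℕ) (x y : X) : ℝ :=
  gs 0 y + ∑ n ∈ Finset.range N, (gs (n+1) y - gs n y) * hh n (rho gs x y)

lemma S_cont (gs : ℕ → X → ℝ) (hc : ∀ n, Continuous (gs n)) (N : ℕ) :
    Continuous fun p : X × X => S gs N p.1 p.2 := by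
  apply Continuous.add ((hc 0).comp continuous_snd)
  apply continuous_finset_sum
  intro n _
  exact (((hc (n+1)).comp continuous_snd).sub ((hc n).comp continuous_snd)).mul
    ((hh_cont n).comp (rho_cont gs hc))

lemma S_zero (gs : ℕ → X → ℝ) {x y : X} (h : rho gs x y = 0) (N : ℕ) :
    S gs N x y = gs N y := by
  have : ∀ n ∈ Finset.range N, (gs (n+1) y - gs n y) * hh n (rho gs x y)
      = gs (n+1) y - gs n y := by
    intro n _
    rw [h, hh_eq_one n 0 (by positivity), mul_one]
  rw [S, Finset.sum_congr rfl this, Finset.sum_range_sub (fun k => gs k y)]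
  ring

lemma S_stable (gs : ℕ → X → ℝ) {x y : X} {N : ℕ} (h : (1/4:ℝ)^N < rho gs x y)
    {M : ℕ} (hM : N ≤ M) : S gs M x y = S gs N x y := by
  rw [S, S]
  congr 1
  apply (Finset.sum_subset (Finset.range_subset_range.2 hM) ?_).symm
  intro n _ hn
  rw [Finset.mem_range, not_lt] at hn
  have : (1/4:ℝ)^n ≤ rho gs x y :=
    le_of_lt (lt_of_le_of_lt (pow_le_pow_of_le_one (by norm_num) (by norm_num) hn) h)
  rw [hh_eq_zero n _ this, mul_zero]

noncomputable def F (gs : ℕ → X → ℝ) (x y : X) : ℝ :=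
  limUnder atTop fun N => S gs N x y

lemma F_eq_zero (gs : ℕ → X → ℝ) {x y : X} {L : ℝ}
    (hlim : Tendsto (fun n => gs n y) atTop (𝓝 L)) (h : rho gs x y = 0) :
    F gs x y = L := by
  apply Filter.Tendsto.limUnder_eq
  have : (fun N => S gs N x y) = fun N => gs N y := funext fun N => S_zero gs h N
  rw [this]
  exact hlim

lemma F_eq_pos (gs : ℕ → X → ℝ) {x y : X} {N : ℕ} (h : (1/4:ℝ)^N < rho gs x y) :
    F gs x y = S gs N x y := by
  apply Filter.Tendsto.limUnder_eq
  apply Filter.Tendsto.congr' _ (tendsto_const_nhds (x := S gs N x y))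
  filter_upwards [eventually_ge_atTop N] with M hM
  exact (S_stable gs h hM).symm

lemma F_formula (gs : ℕ → X → ℝ) {x y : X} {m : ℕ}
    (h1 : (1/4:ℝ)^(m+1) < rho gs x y) (h2 : rho gs x y ≤ (1/4:ℝ)^m) :
    F gs x y = gs m y + (gs (m+1) y - gs m y) * hh m (rho gs x y) := by
  rw [F_eq_pos gs h1, S, Finset.sum_range_succ]
  have : ∀ n ∈ Finset.range m, (gs (n+1) y - gs n y) * hh n (rho gs x y)
      = gs (n+1) y - gs n y := by
    intro n hn
    rw [hh_eq_one n _ (le_trans h2 (pow_le_pow_of_le_one (by norm_num) (by norm_num)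
      (Finset.mem_range.1 hn))), mul_one]
  rw [Finset.sum_congr rfl this, Finset.sum_range_sub (fun k => gs k y)]
  ring

lemma exists_m (N : ℕ) (t : ℝ) (h0 : 0 < t) (hN : t < (1/4:ℝ)^(N+1)) :
    ∃ m, N + 1 ≤ m ∧ (1/4:ℝ)^(m+1) < t ∧ t ≤ (1/4:ℝ)^m := by
  have hex : ∃ n, (1/4:ℝ)^(n+1) < t := by
    obtain ⟨n, hn⟩ := exists_pow_lt_of_lt_one h0 (show (1/4:ℝ) < 1 by norm_num)
    exact ⟨n, lt_of_le_of_lt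
      (pow_le_pow_of_le_one (by norm_num) (by norm_num) (Nat.le_succ n)) hn⟩
  set m := Nat.find hex with hm
  have hspec : (1/4:ℝ)^(m+1) < t := Nat.find_spec hex
  have hNm : N + 1 ≤ m := by
    by_contra hcon
    push_neg at hcon
    have : m + 1 ≤ N + 1 := hcon
    have := pow_le_pow_of_le_one (show (0:ℝ) ≤ 1/4 by norm_num)
      (show (1/4:ℝ) ≤ 1 by norm_num) this
    linarith
  have hm1 : 1 ≤ m := le_trans (Nat.le_add_left 1 N) hNm
  have hle : t ≤ (1/4:ℝ)^m := by
    have := Nat.find_min hex (show m - 1 < m by omega)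
    push_neg at this
    have e : m - 1 + 1 = m := by omega
    rwa [e] at this
  exact ⟨m, hNm, hspec, hle⟩

lemma convex_abs {θ A B c d : ℝ} (h0 : 0 ≤ θ) (h1 : θ ≤ 1)
    (hA : |A - c| ≤ d) (hB : |B - c| ≤ d) :
    |A + (B - A) * θ - c| ≤ d := by
  rw [abs_le] at *
  constructor <;> nlinarith [hA.1, hA.2, hB.1, hB.2]

end Stmt9Aux

open Stmt9Aux in
theorem stmt9 {X : Type*} [TopologicalSpace X] (g : X → ℝ)
    (hg : ∃ gs : ℕ → X → ℝ, (∀ n, Continuous (gs n)) ∧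
      ∀ x, Tendsto (fun n => gs n x) atTop (𝓝 (g x))) :
    ∃ f : X × X → ℝ,
      (∀ x : X, Continuous fun y => f (x, y)) ∧
      (∀ y : X, Continuous fun x => f (x, y)) ∧
      (∀ x, f (x, x) = g x) := by
  obtain ⟨gs, hc, hlim⟩ := hg
  have hgeq : ∀ {x y : X}, rho gs x y = 0 → g x = g y := by
    intro x y h
    apply tendsto_nhds_unique (hlim x)
    have he : (fun n => gs n x) = fun n => gs n y :=
      funext fun k => eq_of_rho_eq_zero gs h k
    rw [he]
    exact hlim y
  refine ⟨fun p => F gs p.1 p.2, ?_, ?_, ?_⟩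
  · intro x
    show Continuous fun y => F gs x y
    rw [continuous_iff_continuousAt]
    intro y0
    have hρc : Continuous fun y => rho gs x y :=
      (rho_cont gs hc).comp (Continuous.prodMk_right x)
    rcases (rho_nonneg gs x y0).eq_or_lt with h0 | h0
    · -- rho gs x y0 = 0 : hard case
      replace h0 : rho gs x y0 = 0 := h0.symm
      have hFy0 : F gs x y0 = g y0 := F_eq_zero gs (hlim y0) h0
      have hgx : g x = g y0 := hgeq h0
      show Tendsto (fun y => F gs x y) (𝓝 y0) (𝓝 (F gs x y0))
      rw [Metric.tendsto_nhds]
      intro ε hε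
      obtain ⟨N1, hN1⟩ := Metric.tendsto_atTop.1 (hlim x) (ε/2) (by linarith)
      obtain ⟨N2, hN2⟩ := exists_pow_lt_of_lt_one (show (0:ℝ) < ε/4 by linarith)
        (show (1/2:ℝ) < 1 by norm_num)
      set N := max N1 (max N2 1) with hNdef
      have hN1' : N1 ≤ N := le_max_left _ _
      have hN2' : N2 ≤ N := le_trans (le_max_left _ _) (le_max_right _ _)
      have hNone : 1 ≤ N := le_trans (le_max_right _ _) (le_max_right _ _)
      have hpow : (1/2:ℝ)^N < ε/4 :=
        lt_of_le_of_lt (pow_le_pow_of_le_one (by norm_num) (by norm_num) hN2') hN2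
      have hev : ∀ᶠ y in 𝓝 y0, rho gs x y < (1/4:ℝ)^(N+1) := by
        have ht : Tendsto (fun y => rho gs x y) (𝓝 y0) (𝓝 (rho gs x y0)) :=
          hρc.continuousAt
        have h' : rho gs x y0 < (1/4:ℝ)^(N+1) := by rw [h0]; positivity
        exact ht.eventually (gt_mem_nhds h')
      filter_upwards [hev] with y hy
      rcases (rho_nonneg gs x y).eq_or_lt with hz | hpos
      · replace hz : rho gs x y = 0 := hz.symm
        rw [F_eq_zero gs (hlim y) hz, hFy0, Real.dist_eq, ← hgeq hz, hgx, sub_self, abs_zero]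
        exact hε
      · obtain ⟨m, hmN, hm1, hm2⟩ := exists_m N (rho gs x y) hpos hy
        have hform := F_formula gs hm1 hm2
        have hgauge := gauge gs x y m (by omega) hm2
        have hmono : 2*(1/2:ℝ)^m ≤ (1/2:ℝ)^N := by
          have h5 : (1/2:ℝ)^m ≤ (1/2:ℝ)^(N+1) :=
            pow_le_pow_of_le_one (by norm_num) (by norm_num) hmN
          rw [pow_succ] at h5
          linarith
        have hAk : ∀ k, k ≤ m+1 → N1 ≤ k → |gs k y - g x| ≤ 3*ε/4 := by
          intro k hk hk1
          have t1 : |gs k x - gs k y| ≤ 2*(1/2:ℝ)^m := hgauge k hk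
          have t2 := hN1 k hk1
          rw [Real.dist_eq] at t2
          calc |gs k y - g x| ≤ |gs k y - gs k x| + |gs k x - g x| := abs_sub_le _ _ _
            _ ≤ 2*(1/2:ℝ)^m + |gs k x - g x| := by rw [abs_sub_comm]; linarith
            _ ≤ 3*ε/4 := by linarith
        have key := convex_abs (hh_nonneg m (rho gs x y)) (hh_le_one m (rho gs x y))
          (hAk m (by omega) (by omega)) (hAk (m+1) (by omega) (by omega))
        rw [Real.dist_eq, hFy0, ← hgx, hform]
        calc |gs m y + (gs (m+1) y - gs m y) * hh m (rho gs x y) - g x| ≤ 3*ε/4 := key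
          _ < ε := by linarith
    · obtain ⟨N, hN⟩ : ∃ N, (1/4:ℝ)^N < rho gs x y0 :=
        exists_pow_lt_of_lt_one h0 (by norm_num)
      have hev : ∀ᶠ y in 𝓝 y0, (1/4:ℝ)^N < rho gs x y :=
        hρc.continuousAt.eventually (lt_mem_nhds hN)
      have hS : ContinuousAt (fun y => S gs N x y) y0 :=
        ((S_cont gs hc N).comp (Continuous.prodMk_right x)).continuousAt
      exact hS.congr (hev.mono fun y hy => (F_eq_pos gs hy).symm)
  · intro y
    show Continuous fun x => F gs x y
    rw [continuous_iff_continuousAt]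
    intro x0
    have hρc : Continuous fun x => rho gs x y :=
      (rho_cont gs hc).comp (continuous_id.prodMk continuous_const)
    rcases (rho_nonneg gs x0 y).eq_or_lt with h0 | h0
    · replace h0 : rho gs x0 y = 0 := h0.symm
      have hFx0 : F gs x0 y = g y := F_eq_zero gs (hlim y) h0
      show Tendsto (fun x => F gs x y) (𝓝 x0) (𝓝 (F gs x0 y))
      rw [Metric.tendsto_nhds]
      intro ε hε
      obtain ⟨N1, hN1⟩ := Metric.tendsto_atTop.1 (hlim y) (ε/2) (by linarith)
      set N := max N1 1 with hNdef
      have hN1' : N1 ≤ N := le_max_left _ _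
      have hNone : 1 ≤ N := le_max_right _ _
      have hev : ∀ᶠ x in 𝓝 x0, rho gs x y < (1/4:ℝ)^(N+1) := by
        have ht : Tendsto (fun x => rho gs x y) (𝓝 x0) (𝓝 (rho gs x0 y)) :=
          hρc.continuousAt
        have h' : rho gs x0 y < (1/4:ℝ)^(N+1) := by rw [h0]; positivity
        exact ht.eventually (gt_mem_nhds h')
      filter_upwards [hev] with x hx
      rcases (rho_nonneg gs x y).eq_or_lt with hz | hpos
      · replace hz : rho gs x y = 0 := hz.symm
        rw [F_eq_zero gs (hlim y) hz, hFx0, dist_self]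
        exact hε
      · obtain ⟨m, hmN, hm1, hm2⟩ := exists_m N (rho gs x y) hpos hx
        have hform := F_formula gs hm1 hm2
        have hAk : ∀ k, N1 ≤ k → |gs k y - g y| ≤ ε/2 := by
          intro k hk
          have t2 := hN1 k hk
          rw [Real.dist_eq] at t2
          linarith
        have key := convex_abs (hh_nonneg m (rho gs x y)) (hh_le_one m (rho gs x y))
          (hAk m (by omega)) (hAk (m+1) (by omega))
        rw [Real.dist_eq, hFx0, hform]
        calc |gs m y + (gs (m+1) y - gs m y) * hh m (rho gs x y) - g y| ≤ ε/2 := key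
          _ < ε := by linarith
    · obtain ⟨N, hN⟩ : ∃ N, (1/4:ℝ)^N < rho gs x0 y :=
        exists_pow_lt_of_lt_one h0 (by norm_num)
      have hev : ∀ᶠ x in 𝓝 x0, (1/4:ℝ)^N < rho gs x y :=
        hρc.continuousAt.eventually (lt_mem_nhds hN)
      have hS : ContinuousAt (fun x => S gs N x y) x0 :=
        ((S_cont gs hc N).comp (continuous_id.prodMk continuous_const)).continuousAt
      exact hS.congr (hev.mono fun x hx => (F_eq_pos gs hx).symm)
  · intro x
    exact F_eq_zero gs (hlim x) (rho_self gs x)
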